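/- Let A_1, A_2, … be a quasifibonacci sequence of level N, let k ≥ 2, let n satisfy A_k ≤ n < A_k + A_{k−1}, and set n' = A_1 + A_2 + ⋯ + A_k − n. Then the complementation map φ(a) = (1−a_1, …, 1−a_k) maps {a ∈ S_n : l(a) = k} bijectively onto {b ∈ S_{n'} : l(b) = k−1} and maps {a ∈ S_n : l(a) = k−1} bijectively onto {b ∈ S_{n'} : l(b) = k}; i.e., U_n is dual to D_{n'} and D_n is dual to U_{n'}. -/
import Mathlib


/-- `A` (with meaningful values at indices `≥ 1`) is a quasifibonacci sequence of level `N`: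
the terms are positive, `A (k+N) = A (k+N-1) + ⋯ + A k` for all `k ≥ 1`, and
`A k > A (k-1) + ⋯ + A 1` for all `1 ≤ k ≤ N`. -/
def QuasiFib (N : ℕ) (A : ℕ → ℕ) : Prop :=
  (∀ i, 1 ≤ i → 0 < A i) ∧
  (∀ k, 1 ≤ k → A (k + N) = ∑ i ∈ Finset.Icc k (k + N - 1), A i) ∧
  (∀ k, 1 ≤ k → k ≤ N → (∑ i ∈ Finset.Icc 1 (k - 1), A i) < A k)

/-- `SRep A n` is the set of partitions of `n` into distinct terms of `A`, encoded as the
finite sets `F` of positive indices with `∑_{i ∈ F} A i = n` (i.e. the 0-1 indicator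
sequences of the paper). -/
def SRep (A : ℕ → ℕ) (n : ℕ) : Set (Finset ℕ) :=
  {F | (∀ i ∈ F, 1 ≤ i) ∧ (∑ i ∈ F, A i) = n}

/-- the length `l(a)`: the largest index `i` with `a_i = 1` (and `0` for the empty set). -/
def len (F : Finset ℕ) : ℕ := F.sup id

/-- The directed edge relation of the digraph `G_n`: `(a,b)` is an edge iff there is a `k ≥ 1`
with `a_{k+N} = 1`, `a_k = ⋯ = a_{k+N-1} = 0`, `b_{k+N} = 0`, `b_k = ⋯ = b_{k+N-1} = 1`, and
`a_t = b_t` for all `t ∉ {k, …, k+N}`. -/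
def Edge (N : ℕ) (F G : Finset ℕ) : Prop :=
  ∃ k, 1 ≤ k ∧ (k + N) ∈ F ∧ (∀ i ∈ Finset.Ico k (k + N), i ∉ F) ∧
    (k + N) ∉ G ∧ (∀ i ∈ Finset.Ico k (k + N), i ∈ G) ∧
    (∀ t, t ∉ Finset.Icc k (k + N) → (t ∈ F ↔ t ∈ G))

/-- The partial order of the poset `P_n`: `a ≥ b` iff `b` is reachable from `a` by a
(possibly empty) directed path of edges. -/
def pge (N : ℕ) : Finset ℕ → Finset ℕ → Prop := Relation.ReflTransGen (Edge N)

/-- `A_{k,0} = A_k + Σ_{1 ≤ i < k-N-1, N∤i} A_{k-N-1-i}`. -/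
def Ak0 (N : ℕ) (A : ℕ → ℕ) (k : ℕ) : ℕ :=
  A k + ∑ i ∈ (Finset.Ico 1 (k - N - 1)).filter (fun i => ¬ N ∣ i), A (k - N - 1 - i)

/-- `A_{k,1} = A_k + Σ_{1 ≤ i < k-N, N∤i} A_{k-N-i}`. -/
def Ak1 (N : ℕ) (A : ℕ → ℕ) (k : ℕ) : ℕ :=
  A k + ∑ i ∈ (Finset.Ico 1 (k - N)).filter (fun i => ¬ N ∣ i), A (k - N - i)

/-- `A_{k,2} = A_k + Σ_{1 ≤ i < k-N+1, N∤i} A_{k-N+1-i}`. -/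
def Ak2 (N : ℕ) (A : ℕ → ℕ) (k : ℕ) : ℕ :=
  A k + ∑ i ∈ (Finset.Ico 1 (k - N + 1)).filter (fun i => ¬ N ∣ i), A (k - N + 1 - i)

/-- ℤ-indexed version of `SRep` (empty for negative `m`). -/
def SRepZ (A : ℕ → ℕ) (m : ℤ) : Set (Finset ℕ) :=
  {F | (∀ i ∈ F, 1 ≤ i) ∧ (∑ i ∈ F, (A i : ℤ)) = m}

open Finset

lemma qf_rec {N : ℕ} {A : ℕ → ℕ} (hA : QuasiFib N A) (hN : 1 ≤ N) {j : ℕ} (hj : N + 1 ≤ j) :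
    A j = ∑ i ∈ Finset.Ico (j - N) j, A i := by
  have h := hA.2.1 (j - N) (by omega)
  rw [show j - N + N = j by omega] at h
  rw [h]
  congr 1
  ext t
  simp only [Finset.mem_Icc, Finset.mem_Ico]
  omega

lemma icc_eq_ico (a b : ℕ) (hb : 1 ≤ b) : Finset.Icc a (b - 1) = Finset.Ico a b := by
  ext t; simp only [Finset.mem_Icc, Finset.mem_Ico]; omega

-- A is monotone on indices ≥ 1
lemma qf_mono {N : ℕ} {A : ℕ → ℕ} (hN : 2 ≤ N) (hA : QuasiFib N A) :
    ∀ i j, 1 ≤ i → i ≤ j → A i ≤ A j := by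
  have step : ∀ j, 1 ≤ j → A j ≤ A (j + 1) := by
    intro j hj
    rcases le_or_gt (j + 1) N with h | h
    · have := hA.2.2 (j+1) (by omega) h
      calc A j ≤ ∑ i ∈ Finset.Icc 1 (j + 1 - 1), A i := by
            apply Finset.single_le_sum (f := A) (fun i _ => Nat.zero_le _)
            simp only [Finset.mem_Icc]; omega
        _ ≤ A (j+1) := this.le
    · rw [qf_rec hA (by omega) (by omega : N + 1 ≤ j + 1)]
      apply Finset.single_le_sum (f := A) (fun i _ => Nat.zero_le _)
      simp only [Finset.mem_Ico]; omega
  intro i j hi hij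
  induction j with
  | zero => omega
  | succ m ih =>
    rcases Nat.lt_or_ge i (m+1) with h | h
    · exact le_trans (ih (by omega)) (step m (by omega))
    · have : i = m + 1 := by omega
      subst this; exact le_rfl

-- key inequality: A k > sum of A_1 .. A_{k-2}
lemma qf_claimC {N : ℕ} {A : ℕ → ℕ} (hN : 2 ≤ N) (hA : QuasiFib N A) :
    ∀ k, 1 ≤ k → (∑ i ∈ Finset.Ico 1 (k - 1), A i) < A k := by
  intro k
  induction k using Nat.strong_induction_on with
  | _ k ih =>
    intro hk
    rcases le_or_gt k N with hkN | hkN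
    · calc ∑ i ∈ Finset.Ico 1 (k-1), A i ≤ ∑ i ∈ Finset.Icc 1 (k-1), A i :=
            Finset.sum_le_sum_of_subset (by intro t ht; simp only [Finset.mem_Icc, Finset.mem_Ico] at *; omega)
        _ < A k := hA.2.2 k hk hkN
    · rw [qf_rec hA (by omega) (by omega)]
      have h1 : (∑ i ∈ Finset.Ico 1 (k-1), A i)
          = (∑ i ∈ Finset.Ico 1 (k-N), A i) + ∑ i ∈ Finset.Ico (k-N) (k-1), A i :=
        (Finset.sum_Ico_consecutive _ (by omega) (by omega)).symm
      have h2 : (∑ i ∈ Finset.Ico (k-N) k, A i)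
          = (∑ i ∈ Finset.Ico (k-N) (k-1), A i) + A (k-1) := by
        have := Finset.sum_Ico_succ_top (a := k - N) (b := k - 1) (by omega) A
        rw [show k - 1 + 1 = k by omega] at this
        exact this
      rw [h1, h2]
      have h3 : (∑ i ∈ Finset.Ico 1 (k-N), A i) < A (k-1) := by
        have := ih (k-1) (by omega) (by omega)
        calc (∑ i ∈ Finset.Ico 1 (k-N), A i) ≤ ∑ i ∈ Finset.Ico 1 (k-1-1), A i :=
              Finset.sum_le_sum_of_subset (by intro t ht; simp only [Finset.mem_Ico] at *; omega)
          _ < A (k-1) := this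
      omega

-- A (k+1) ≥ A k + A (k-1) for k ≥ 2
lemma qf_fib {N : ℕ} {A : ℕ → ℕ} (hN : 2 ≤ N) (hA : QuasiFib N A) {k : ℕ} (hk : 2 ≤ k) :
    A k + A (k - 1) ≤ A (k + 1) := by
  have hpair : A (k-1) + A k = ∑ i ∈ ({k-1, k} : Finset ℕ), A i := by
    rw [Finset.sum_pair (by omega : k - 1 ≠ k)]
  rcases le_or_gt (k + 1) N with h | h
  · have h2 := hA.2.2 (k+1) (by omega) h
    have hsub : ({k-1, k} : Finset ℕ) ⊆ Finset.Icc 1 (k+1-1) := by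
      intro t ht; simp only [Finset.mem_insert, Finset.mem_singleton] at ht
      simp only [Finset.mem_Icc]; omega
    have hle := Finset.sum_le_sum_of_subset (f := A) hsub
    calc A k + A (k-1) = A (k-1) + A k := by ring
      _ = ∑ i ∈ ({k-1, k} : Finset ℕ), A i := hpair
      _ ≤ ∑ i ∈ Finset.Icc 1 (k+1-1), A i := hle
      _ ≤ A (k+1) := h2.le
  · rw [qf_rec hA (by omega) (j := k + 1) (by omega)]
    have hsub : ({k-1, k} : Finset ℕ) ⊆ Finset.Ico (k+1-N) (k+1) := by
      intro t ht; simp only [Finset.mem_insert, Finset.mem_singleton] at ht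
      simp only [Finset.mem_Ico]; omega
    have hle := Finset.sum_le_sum_of_subset (f := A) hsub
    calc A k + A (k-1) = A (k-1) + A k := by ring
      _ = ∑ i ∈ ({k-1, k} : Finset ℕ), A i := hpair
      _ ≤ ∑ i ∈ Finset.Ico (k+1-N) (k+1), A i := hle

-- index bound: elements of an SRepZ-set with small sum are ≤ k
lemma mem_le_of_sum_lt {N : ℕ} {A : ℕ → ℕ} (hN : 2 ≤ N) (hA : QuasiFib N A)
    {k : ℕ} (hk : 1 ≤ k) {m : ℤ} (hm : m < (A (k+1) : ℤ)) {F : Finset ℕ}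
    (hF : F ∈ SRepZ A m) : F ⊆ Finset.Icc 1 k := by
  intro i hi
  simp only [Finset.mem_Icc]
  refine ⟨hF.1 i hi, ?_⟩
  by_contra h
  push_neg at h
  have h1 : (A i : ℤ) ≤ ∑ j ∈ F, (A j : ℤ) :=
    Finset.single_le_sum (f := fun j => (A j : ℤ)) (fun j _ => by positivity) hi
  have h2 : A (k+1) ≤ A i := qf_mono hN hA (k+1) i (by omega) (by omega)
  rw [hF.2] at h1
  have : ((A (k+1) : ℤ)) ≤ (A i : ℤ) := by exact_mod_cast h2
  omega

-- Edge preserves SRepZ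
lemma edge_srepz {N : ℕ} {A : ℕ → ℕ} (hN : 2 ≤ N) (hA : QuasiFib N A)
    {m : ℤ} {F G : Finset ℕ} (hF : F ∈ SRepZ A m) (hE : Edge N F G) : G ∈ SRepZ A m := by
  obtain ⟨j, hj1, hjF, hIcoF, hjG, hIcoG, hout⟩ := hE
  have hGeq : G = (F \ Finset.Icc j (j + N)) ∪ Finset.Ico j (j + N) := by
    ext t
    simp only [Finset.mem_union, Finset.mem_sdiff, Finset.mem_Icc, Finset.mem_Ico]
    constructor
    · intro htG
      by_cases hc : j ≤ t ∧ t ≤ j + N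
      · right
        refine ⟨hc.1, ?_⟩
        rcases Nat.lt_or_ge t (j + N) with h | h
        · exact h
        · exfalso; have : t = j + N := by omega
          subst this; exact hjG htG
      · left
        refine ⟨?_, by omega⟩
        exact (hout t (by simp only [Finset.mem_Icc]; omega)).2 htG
    · rintro (⟨htF, hc⟩ | ⟨h1, h2⟩)
      · exact (hout t (by simp only [Finset.mem_Icc]; omega)).1 htF
      · exact hIcoG t (by simp only [Finset.mem_Ico]; omega)
  have hFeq : F = (F \ Finset.Icc j (j + N)) ∪ {j + N} := by
    ext t
    simp only [Finset.mem_union, Finset.mem_sdiff, Finset.mem_Icc, Finset.mem_singleton]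
    constructor
    · intro htF
      by_cases hc : j ≤ t ∧ t ≤ j + N
      · right
        rcases Nat.lt_or_ge t (j + N) with h | h
        · exact absurd htF (hIcoF t (by simp only [Finset.mem_Ico]; omega))
        · omega
      · left; exact ⟨htF, by omega⟩
    · rintro (⟨htF, _⟩ | rfl)
      · exact htF
      · exact hjF
  have hd1 : Disjoint (F \ Finset.Icc j (j + N)) (Finset.Ico j (j + N)) := by
    rw [Finset.disjoint_left]
    intro t ht ht'
    simp only [Finset.mem_sdiff, Finset.mem_Icc] at ht
    simp only [Finset.mem_Ico] at ht'
    omega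
  have hd2 : Disjoint (F \ Finset.Icc j (j + N)) ({j + N} : Finset ℕ) := by
    rw [Finset.disjoint_left]
    intro t ht ht'
    simp only [Finset.mem_sdiff, Finset.mem_Icc] at ht
    simp only [Finset.mem_singleton] at ht'
    omega
  have hsumA : (A (j + N) : ℤ) = ∑ i ∈ Finset.Ico j (j + N), (A i : ℤ) := by
    have := qf_rec hA (by omega) (by omega : N + 1 ≤ j + N)
    rw [show j + N - N = j by omega] at this
    rw [this]; push_cast; ring
  constructor
  · intro i hi
    rw [hGeq] at hi
    simp only [Finset.mem_union, Finset.mem_sdiff, Finset.mem_Ico] at hi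
    rcases hi with ⟨h, _⟩ | ⟨h, _⟩
    · exact hF.1 i h
    · omega
  · have hs1 : ∑ i ∈ G, (A i : ℤ)
        = (∑ i ∈ F \ Finset.Icc j (j + N), (A i : ℤ)) + ∑ i ∈ Finset.Ico j (j + N), (A i : ℤ) := by
      rw [hGeq, Finset.sum_union hd1]
    have hs2 : m = (∑ i ∈ F \ Finset.Icc j (j + N), (A i : ℤ)) + (A (j + N) : ℤ) := by
      rw [← hF.2]
      conv_lhs => rw [hFeq]
      rw [Finset.sum_union hd2, Finset.sum_singleton]
    rw [hs1, hs2, hsumA]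

-- Edge and complementation
lemma edge_compl {N k : ℕ} {F G : Finset ℕ} (hF : F ⊆ Finset.Icc 1 k) (hG : G ⊆ Finset.Icc 1 k)
    (hE : Edge N F G) : Edge N (Finset.Icc 1 k \ G) (Finset.Icc 1 k \ F) := by
  obtain ⟨j, hj1, hjF, hIcoF, hjG, hIcoG, hout⟩ := hE
  have hjk : j + N ≤ k := (Finset.mem_Icc.mp (hF hjF)).2
  refine ⟨j, hj1, ?_, ?_, ?_, ?_, ?_⟩
  · simp only [Finset.mem_sdiff, Finset.mem_Icc]; exact ⟨⟨by omega, hjk⟩, hjG⟩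
  · intro i hi
    simp only [Finset.mem_Ico] at hi
    simp only [Finset.mem_sdiff, Finset.mem_Icc, not_and, not_not]
    intro _
    exact hIcoG i (by simp only [Finset.mem_Ico]; omega)
  · simp only [Finset.mem_sdiff, Finset.mem_Icc, not_and, not_not]
    intro _; exact hjF
  · intro i hi
    simp only [Finset.mem_Ico] at hi
    simp only [Finset.mem_sdiff, Finset.mem_Icc]
    exact ⟨⟨by omega, by omega⟩, hIcoF i (by simp only [Finset.mem_Ico]; omega)⟩
  · intro t ht
    have := hout t ht
    simp only [Finset.mem_sdiff]
    tauto


section Helpers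

variable {N : ℕ} {A : ℕ → ℕ}

lemma srepz_of_pge (hN : 2 ≤ N) (hA : QuasiFib N A) {m : ℤ} {a b : Finset ℕ}
    (ha : a ∈ SRepZ A m) (hab : pge N a b) : b ∈ SRepZ A m := by
  induction hab with
  | refl => exact ha
  | tail _ step ih => exact edge_srepz hN hA ih step

lemma pge_compl (hN : 2 ≤ N) (hA : QuasiFib N A) {k : ℕ} (hk : 1 ≤ k) {m : ℤ}
    (hm : m < (A (k+1) : ℤ)) {a b : Finset ℕ} (ha : a ∈ SRepZ A m) (hab : pge N a b) :
    pge N (Finset.Icc 1 k \ b) (Finset.Icc 1 k \ a) := by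
  induction hab with
  | refl => exact Relation.ReflTransGen.refl
  | @tail c b h step ih =>
    have hc : c ∈ SRepZ A m := srepz_of_pge hN hA ha h
    have hb : b ∈ SRepZ A m := edge_srepz hN hA hc step
    exact Relation.ReflTransGen.head
      (edge_compl (mem_le_of_sum_lt hN hA hk hm hc) (mem_le_of_sum_lt hN hA hk hm hb) step) ih

lemma len_spec {F : Finset ℕ} {j : ℕ} (hj : 1 ≤ j) (h : len F = j) :
    j ∈ F ∧ ∀ i ∈ F, i ≤ j := by
  have hne : F.Nonempty := by
    rcases F.eq_empty_or_nonempty with rfl | h'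
    · simp only [len, Finset.sup_empty] at h
      exact absurd h.symm (by simpa using Nat.ne_of_gt hj)
    · exact h'
  obtain ⟨b, hb, hbe⟩ := Finset.exists_mem_eq_sup F hne id
  unfold len at h
  constructor
  · have : b = j := by rw [← h, hbe]; rfl
    exact this ▸ hb
  · intro i hi
    have := Finset.le_sup (f := id) hi
    rw [h] at this
    exact this

lemma len_eq {F : Finset ℕ} {j : ℕ} (hjF : j ∈ F) (hbd : ∀ i ∈ F, i ≤ j) : len F = j :=
  le_antisymm (Finset.sup_le hbd) (Finset.le_sup (f := id) hjF)

end Helpers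

/-- Proposition 4.2: for `k ≥ 2`, `A_k ≤ n < A_k + A_{k-1}` and `n' = A_1 + ⋯ + A_k - n`,
complementation `φ(a) = (1-a_1, …, 1-a_k)` maps `T_n = {a ∈ S_n : l(a) = k}` bijectively onto
`{b ∈ S_{n'} : l(b) = k-1}` and maps `R_n = {a ∈ S_n : l(a) = k-1}` bijectively onto
`{b ∈ S_{n'} : l(b) = k}`, reversing the order; i.e. `U_n` is dual to `D_{n'}` and `D_n` is
dual to `U_{n'}`. -/
theorem stmt_11 (N : ℕ) (hN : 2 ≤ N) (A : ℕ → ℕ) (hA : QuasiFib N A)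
    (k n : ℕ) (hk : 2 ≤ k) (h1 : A k ≤ n) (h2 : n < A k + A (k - 1)) :
    Set.BijOn (fun F => Finset.Icc 1 k \ F)
      {F | F ∈ SRep A n ∧ len F = k}
      {G | G ∈ SRepZ A ((∑ i ∈ Finset.Icc 1 k, (A i : ℤ)) - n) ∧ len G = k - 1} ∧
    Set.BijOn (fun F => Finset.Icc 1 k \ F)
      {F | F ∈ SRep A n ∧ len F = k - 1}
      {G | G ∈ SRepZ A ((∑ i ∈ Finset.Icc 1 k, (A i : ℤ)) - n) ∧ len G = k} ∧
    (∀ a ∈ SRep A n, ∀ b ∈ SRep A n,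
      (pge N a b ↔ pge N (Finset.Icc 1 k \ b) (Finset.Icc 1 k \ a))) := by
  have hApos := hA.1
  have hnlt : n < A (k+1) := lt_of_lt_of_le h2 (qf_fib hN hA hk)
  have hcast : ∀ (s : Finset ℕ), (∑ i ∈ s, (A i : ℤ)) = ((∑ i ∈ s, A i : ℕ) : ℤ) :=
    fun s => (Nat.cast_sum s A).symm
  have hsplitk : (∑ i ∈ Finset.Icc 1 k, A i) = (∑ i ∈ Finset.Ico 1 k, A i) + A k := by
    have e1 : Finset.Icc 1 k = Finset.Ico 1 (k+1) := by
      ext t; simp only [Finset.mem_Icc, Finset.mem_Ico]; omega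
    rw [e1, Finset.sum_Ico_succ_top (by omega : 1 ≤ k)]
  have hsplit1 : (∑ i ∈ Finset.Icc 1 k, A i)
      = (∑ i ∈ Finset.Ico 1 (k-1), A i) + A (k-1) + A k := by
    rw [hsplitk]
    have e2 : (∑ i ∈ Finset.Ico 1 k, A i) = (∑ i ∈ Finset.Ico 1 (k-1), A i) + A (k-1) := by
      have := Finset.sum_Ico_succ_top (a := 1) (b := k-1) (by omega) A
      rw [show k - 1 + 1 = k by omega] at this
      exact this
    rw [e2]
  have hclaim : (∑ i ∈ Finset.Ico 1 (k-1), A i) < A k := qf_claimC hN hA k (by omega)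
  have hclaim1 : (∑ i ∈ Finset.Ico 1 k, A i) < A (k+1) := by
    have := qf_claimC hN hA (k+1) (by omega)
    rw [Nat.add_sub_cancel] at this
    exact this
  have hSZ : ∀ F : Finset ℕ, F ∈ SRep A n → F ∈ SRepZ A (n : ℤ) := by
    intro F hF; exact ⟨hF.1, by rw [hcast, hF.2]⟩
  have hsubn : ∀ F : Finset ℕ, F ∈ SRep A n → F ⊆ Finset.Icc 1 k := fun F hF =>
    mem_le_of_sum_lt hN hA (by omega) (by exact_mod_cast hnlt) (hSZ F hF)
  have hm'lt : (∑ i ∈ Finset.Icc 1 k, (A i : ℤ)) - n < (A (k+1) : ℤ) := by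
    rw [hcast]; omega
  have hpairsum : ∀ F : Finset ℕ, k ∈ F → k - 1 ∈ F → A (k-1) + A k ≤ ∑ i ∈ F, A i := by
    intro F hkk hk1
    have hsub : ({k-1, k} : Finset ℕ) ⊆ F := by
      intro t ht; simp only [Finset.mem_insert, Finset.mem_singleton] at ht
      rcases ht with rfl | rfl <;> assumption
    calc A (k-1) + A k = ∑ i ∈ ({k-1, k} : Finset ℕ), A i :=
          (Finset.sum_pair (by omega : k - 1 ≠ k)).symm
      _ ≤ ∑ i ∈ F, A i := Finset.sum_le_sum_of_subset hsub
  have hpairsumZ : ∀ F : Finset ℕ, k ∈ F → k - 1 ∈ F →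
      ((A (k-1) : ℤ)) + (A k : ℤ) ≤ ∑ i ∈ F, (A i : ℤ) := by
    intro F hkk hk1
    have hsub : ({k-1, k} : Finset ℕ) ⊆ F := by
      intro t ht; simp only [Finset.mem_insert, Finset.mem_singleton] at ht
      rcases ht with rfl | rfl <;> assumption
    calc ((A (k-1) : ℤ)) + (A k : ℤ) = ∑ i ∈ ({k-1, k} : Finset ℕ), (A i : ℤ) :=
          (Finset.sum_pair (f := fun i => (A i : ℤ)) (by omega : k - 1 ≠ k)).symm
      _ ≤ ∑ i ∈ F, (A i : ℤ) :=
          Finset.sum_le_sum_of_subset_of_nonneg hsub (fun i _ _ => by positivity)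
  have hcc : ∀ F : Finset ℕ, F ⊆ Finset.Icc 1 k →
      Finset.Icc 1 k \ (Finset.Icc 1 k \ F) = F := by
    intro F hF
    rw [Finset.sdiff_sdiff_self_left, Finset.inter_eq_right.mpr hF]
  refine ⟨?_, ?_, ?_⟩
  · -- T_n → len = k-1
    apply Set.InvOn.bijOn (f' := fun F => Finset.Icc 1 k \ F)
    · constructor
      · intro F hF
        simp only [Set.mem_setOf_eq] at hF
        exact hcc F (hsubn F hF.1)
      · intro G hG
        simp only [Set.mem_setOf_eq] at hG
        obtain ⟨⟨hGpos, _⟩, hlen⟩ := hG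
        obtain ⟨_, hbd⟩ := len_spec (by omega : 1 ≤ k - 1) hlen
        exact hcc G (fun i hi => Finset.mem_Icc.mpr
          ⟨hGpos i hi, le_trans (hbd i hi) (by omega)⟩)
    · intro F hF
      simp only [Set.mem_setOf_eq] at hF ⊢
      obtain ⟨⟨hFpos, hFsum⟩, hlen⟩ := hF
      obtain ⟨hkF, hbd⟩ := len_spec (by omega : 1 ≤ k) hlen
      have hFC : F ⊆ Finset.Icc 1 k := hsubn F ⟨hFpos, hFsum⟩
      have hk1F : k - 1 ∉ F := by
        intro hmem
        have := hpairsum F hkF hmem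
        omega
      have hsd : (∑ i ∈ Finset.Icc 1 k \ F, (A i : ℤ)) + ∑ i ∈ F, (A i : ℤ)
          = ∑ i ∈ Finset.Icc 1 k, (A i : ℤ) := Finset.sum_sdiff hFC
      have hFZ : (∑ i ∈ F, (A i : ℤ)) = (n : ℤ) := by rw [hcast, hFsum]
      refine ⟨⟨?_, by omega⟩, ?_⟩
      · intro i hi; exact (Finset.mem_Icc.mp (Finset.mem_sdiff.mp hi).1).1
      · apply len_eq
        · simp only [Finset.mem_sdiff, Finset.mem_Icc]
          exact ⟨⟨by omega, by omega⟩, hk1F⟩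
        · intro i hi
          simp only [Finset.mem_sdiff, Finset.mem_Icc] at hi
          have : i ≠ k := fun h => hi.2 (h ▸ hkF)
          omega
    · intro G hG
      simp only [Set.mem_setOf_eq] at hG ⊢
      obtain ⟨⟨hGpos, hGsum⟩, hlen⟩ := hG
      obtain ⟨hk1G, hbd⟩ := len_spec (by omega : 1 ≤ k - 1) hlen
      have hGC : G ⊆ Finset.Icc 1 k := fun i hi => Finset.mem_Icc.mpr
        ⟨hGpos i hi, le_trans (hbd i hi) (by omega)⟩
      have hkG : k ∉ G := fun h => by have := hbd k h; omega
      have hsd : (∑ i ∈ Finset.Icc 1 k \ G, (A i : ℤ)) + ∑ i ∈ G, (A i : ℤ)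
          = ∑ i ∈ Finset.Icc 1 k, (A i : ℤ) := Finset.sum_sdiff hGC
      refine ⟨⟨?_, ?_⟩, ?_⟩
      · intro i hi; exact (Finset.mem_Icc.mp (Finset.mem_sdiff.mp hi).1).1
      · have hsumn : (∑ i ∈ Finset.Icc 1 k \ G, (A i : ℤ)) = (n : ℤ) := by omega
        rw [hcast] at hsumn
        exact_mod_cast hsumn
      · apply len_eq
        · simp only [Finset.mem_sdiff, Finset.mem_Icc]
          exact ⟨⟨by omega, le_rfl⟩, hkG⟩
        · intro i hi; exact (Finset.mem_Icc.mp (Finset.mem_sdiff.mp hi).1).2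
  · -- R_n → len = k
    apply Set.InvOn.bijOn (f' := fun F => Finset.Icc 1 k \ F)
    · constructor
      · intro F hF
        simp only [Set.mem_setOf_eq] at hF
        exact hcc F (hsubn F hF.1)
      · intro G hG
        simp only [Set.mem_setOf_eq] at hG
        obtain ⟨⟨hGpos, _⟩, hlen⟩ := hG
        obtain ⟨_, hbd⟩ := len_spec (by omega : 1 ≤ k) hlen
        exact hcc G (fun i hi => Finset.mem_Icc.mpr ⟨hGpos i hi, hbd i hi⟩)
    · intro F hF
      simp only [Set.mem_setOf_eq] at hF ⊢
      obtain ⟨⟨hFpos, hFsum⟩, hlen⟩ := hF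
      obtain ⟨hk1F, hbd⟩ := len_spec (by omega : 1 ≤ k - 1) hlen
      have hFC : F ⊆ Finset.Icc 1 k := hsubn F ⟨hFpos, hFsum⟩
      have hkF : k ∉ F := fun h => by have := hbd k h; omega
      have hsd : (∑ i ∈ Finset.Icc 1 k \ F, (A i : ℤ)) + ∑ i ∈ F, (A i : ℤ)
          = ∑ i ∈ Finset.Icc 1 k, (A i : ℤ) := Finset.sum_sdiff hFC
      have hFZ : (∑ i ∈ F, (A i : ℤ)) = (n : ℤ) := by rw [hcast, hFsum]
      refine ⟨⟨?_, by omega⟩, ?_⟩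
      · intro i hi; exact (Finset.mem_Icc.mp (Finset.mem_sdiff.mp hi).1).1
      · apply len_eq
        · simp only [Finset.mem_sdiff, Finset.mem_Icc]
          exact ⟨⟨by omega, le_rfl⟩, hkF⟩
        · intro i hi; exact (Finset.mem_Icc.mp (Finset.mem_sdiff.mp hi).1).2
    · intro G hG
      simp only [Set.mem_setOf_eq] at hG ⊢
      obtain ⟨⟨hGpos, hGsum⟩, hlen⟩ := hG
      obtain ⟨hkG, hbd⟩ := len_spec (by omega : 1 ≤ k) hlen
      have hGC : G ⊆ Finset.Icc 1 k := fun i hi => Finset.mem_Icc.mpr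
        ⟨hGpos i hi, hbd i hi⟩
      have hk1G : k - 1 ∉ G := by
        intro hmem
        have hp := hpairsumZ G hkG hmem
        rw [hGsum, hcast] at hp
        omega
      have hsd : (∑ i ∈ Finset.Icc 1 k \ G, (A i : ℤ)) + ∑ i ∈ G, (A i : ℤ)
          = ∑ i ∈ Finset.Icc 1 k, (A i : ℤ) := Finset.sum_sdiff hGC
      refine ⟨⟨?_, ?_⟩, ?_⟩
      · intro i hi; exact (Finset.mem_Icc.mp (Finset.mem_sdiff.mp hi).1).1
      · have hsumn : (∑ i ∈ Finset.Icc 1 k \ G, (A i : ℤ)) = (n : ℤ) := by omega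
        rw [hcast] at hsumn
        exact_mod_cast hsumn
      · apply len_eq
        · simp only [Finset.mem_sdiff, Finset.mem_Icc]
          exact ⟨⟨by omega, by omega⟩, hk1G⟩
        · intro i hi
          simp only [Finset.mem_sdiff, Finset.mem_Icc] at hi
          have : i ≠ k := fun h => hi.2 (h ▸ hkG)
          omega
  · -- order reversal
    intro a ha b hb
    have haC : a ⊆ Finset.Icc 1 k := hsubn a ha
    have hbC : b ⊆ Finset.Icc 1 k := hsubn b hb
    constructor
    · intro h
      exact pge_compl hN hA (by omega : 1 ≤ k) (by exact_mod_cast hnlt) (hSZ a ha) h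
    · intro h
      have hbc : Finset.Icc 1 k \ b ∈ SRepZ A ((∑ i ∈ Finset.Icc 1 k, (A i : ℤ)) - n) := by
        have hsd : (∑ i ∈ Finset.Icc 1 k \ b, (A i : ℤ)) + ∑ i ∈ b, (A i : ℤ)
            = ∑ i ∈ Finset.Icc 1 k, (A i : ℤ) := Finset.sum_sdiff hbC
        have hbZ : (∑ i ∈ b, (A i : ℤ)) = (n : ℤ) := by rw [hcast, hb.2]
        refine ⟨?_, by omega⟩
        intro i hi; exact (Finset.mem_Icc.mp (Finset.mem_sdiff.mp hi).1).1
      have h' := pge_compl hN hA (by omega : 1 ≤ k) hm'lt hbc h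
      rwa [hcc a haC, hcc b hbC] at h'
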